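/- arXiv:1810.09169 — 3 statements merged into one kernel-verified Lean document; each statement's English description precedes it below -/
import Mathlib

section
/- Let X be a Hausdorff CLP-compact topological space with a dense subspace Y all of whose points are isolated in Y, and let Z be a subset of X such that Z \ Y is finite. Then the closure of Z in X is countably compact at Z, i.e., every infinite subset of Z has an accumulation point lying in the closure of Z. -/
/-! Preamble: graph inverse semigroups and compactness-type properties. -/

namespace GISPaper

variable {V E : Type*}

/-- `IsPathFrom src rng v l` means that the list of edges `l` is composable
and starts at the vertex `v`. -/
def IsPathFrom (src rng : E → V) : V → List E → Prop
  | _, [] => True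
  | v, e :: l => src e = v ∧ IsPathFrom src rng (rng e) l

/-- The end vertex of a list of edges starting at the vertex `v`. -/
def pathEnd (rng : E → V) : V → List E → V
  | v, [] => v
  | _, e :: l => pathEnd rng (rng e) l

theorem pathEnd_append (rng : E → V) (v : V) (l₁ l₂ : List E) :
    pathEnd rng v (l₁ ++ l₂) = pathEnd rng (pathEnd rng v l₁) l₂ := by
  induction l₁ generalizing v with
  | nil => rfl
  | cons e l ih => simpa [pathEnd] using ih (rng e)

theorem isPathFrom_append (src rng : E → V) (v : V) (l₁ l₂ : List E) :
    IsPathFrom src rng v (l₁ ++ l₂) ↔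
      IsPathFrom src rng v l₁ ∧ IsPathFrom src rng (pathEnd rng v l₁) l₂ := by
  induction l₁ generalizing v with
  | nil => simp [IsPathFrom, pathEnd]
  | cons e l ih => simp [IsPathFrom, pathEnd, ih (rng e), and_assoc]

/-- A (directed) path in the graph `(V, E, src, rng)`: a starting vertex together
with a composable list of edges (a path of length zero is just a vertex). -/
structure GPath (src rng : E → V) where
  start : V
  edges : List E
  isPath : IsPathFrom src rng start edges

/-- The range (end vertex) of a path. -/
def GPath.range {src rng : E → V} (p : GPath src rng) : V :=
  pathEnd rng p.start p.edges

/-- The nonzero elements of the graph inverse semigroup: pairs `u v⁻¹` of paths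
with `r u = r v`. -/
def GISElem (src rng : E → V) : Type _ :=
  {p : GPath src rng × GPath src rng // p.1.range = p.2.range}

/-- The graph inverse semigroup over the graph `(V, E, src, rng)`: the nonzero
elements `u v⁻¹` together with a zero element (represented by `none`). -/
def GIS (src rng : E → V) : Type _ := Option (GISElem src rng)

instance {src rng : E → V} : Zero (GIS src rng) :=
  ⟨(none : Option (GISElem src rng))⟩

open Classical in
/-- The multiplication of a graph inverse semigroup:
`u₁v₁⁻¹ · u₂v₂⁻¹ = u₁w v₂⁻¹` if `u₂ = v₁ w`, `u₁v₁⁻¹ · u₂v₂⁻¹ = u₁ (v₂ w)⁻¹` if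
`v₁ = u₂ w`, and `0` otherwise; `0` is absorbing. -/
noncomputable def GIS.mul {src rng : E → V} :
    Option (GISElem src rng) → Option (GISElem src rng) → Option (GISElem src rng)
  | some ⟨(u₁, v₁), h₁⟩, some ⟨(u₂, v₂), h₂⟩ =>
    if h : v₁.start = u₂.start ∧ v₁.edges <+: u₂.edges then
      some ⟨(⟨u₁.start, u₁.edges ++ u₂.edges.drop v₁.edges.length, by
        obtain ⟨hs, t, ht⟩ := h
        have hdrop : u₂.edges.drop v₁.edges.length = t := by
          rw [← ht, List.drop_left]
        have hu₂ := u₂.isPath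
        rw [← ht, isPathFrom_append] at hu₂
        rw [hdrop, isPathFrom_append]
        refine ⟨u₁.isPath, ?_⟩
        have he : pathEnd rng u₁.start u₁.edges = pathEnd rng u₂.start v₁.edges := by
          rw [← hs]; exact h₁
        rw [he]; exact hu₂.2⟩, v₂), by
        show pathEnd rng u₁.start (u₁.edges ++ u₂.edges.drop v₁.edges.length) = v₂.range
        obtain ⟨hs, t, ht⟩ := h
        have hdrop : u₂.edges.drop v₁.edges.length = t := by
          rw [← ht, List.drop_left]
        rw [hdrop, pathEnd_append]
        have he : pathEnd rng u₁.start u₁.edges = pathEnd rng u₂.start v₁.edges := by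
          rw [← hs]; exact h₁
        rw [he, ← pathEnd_append, ht]
        exact h₂⟩
    else if h' : u₂.start = v₁.start ∧ u₂.edges <+: v₁.edges then
      some ⟨(u₁, ⟨v₂.start, v₂.edges ++ v₁.edges.drop u₂.edges.length, by
        obtain ⟨hs, t, ht⟩ := h'
        have hdrop : v₁.edges.drop u₂.edges.length = t := by
          rw [← ht, List.drop_left]
        have hv₁ := v₁.isPath
        rw [← ht, isPathFrom_append] at hv₁
        rw [hdrop, isPathFrom_append]
        refine ⟨v₂.isPath, ?_⟩
        have he : pathEnd rng v₂.start v₂.edges = pathEnd rng v₁.start u₂.edges := by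
          rw [← hs]; exact h₂.symm
        rw [he]; exact hv₁.2⟩), by
        show u₁.range = pathEnd rng v₂.start (v₂.edges ++ v₁.edges.drop u₂.edges.length)
        obtain ⟨hs, t, ht⟩ := h'
        have hdrop : v₁.edges.drop u₂.edges.length = t := by
          rw [← ht, List.drop_left]
        have he : pathEnd rng v₂.start v₂.edges = pathEnd rng v₁.start u₂.edges := by
          rw [← hs]; exact h₂.symm
        rw [hdrop, pathEnd_append, he, ← pathEnd_append, ht]
        exact h₁⟩
    else none
  | _, _ => none

noncomputable instance {src rng : E → V} : Mul (GIS src rng) := ⟨GIS.mul⟩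

theorem GIS.zero_mul {src rng : E → V} (x : GIS src rng) : 0 * x = 0 := rfl

/-- The topology in which every nonzero point is isolated and the open
neighbourhoods of `0` are exactly the cofinite sets containing `0`. -/
def tauC (α : Type*) [Zero α] : TopologicalSpace α where
  IsOpen U := (0 : α) ∈ U → Uᶜ.Finite
  isOpen_univ := by simp
  isOpen_inter U W hU hW h := by
    rw [Set.compl_inter]
    exact (hU h.1).union (hW h.2)
  isOpen_sUnion 𝒮 h h0 := by
    obtain ⟨U, hU, hU0⟩ := h0
    exact (h U hU hU0).subset (Set.compl_subset_compl.mpr (Set.subset_sUnion_of_mem hU))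

/-- A topological space is CLP-compact if every cover by clopen sets has a
finite subcover. -/
def CLPCompact (X : Type*) [TopologicalSpace X] : Prop :=
  ∀ 𝒰 : Set (Set X), (∀ U ∈ 𝒰, IsClopen U) → ⋃₀ 𝒰 = Set.univ →
    ∃ ℱ ⊆ 𝒰, ℱ.Finite ∧ ⋃₀ ℱ = Set.univ

/-- A topological space is countably compact if every infinite subset has an
accumulation point. -/
def CountablyCompactSpace (X : Type*) [TopologicalSpace X] : Prop :=
  ∀ B : Set X, B.Infinite → ∃ x : X, AccPt x (Filter.principal B)

/-- A topological space is feebly compact if every locally finite family of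
nonempty open sets is finite. -/
def FeeblyCompact (X : Type*) [TopologicalSpace X] : Prop :=
  ∀ 𝒰 : Set (Set X), (∀ U ∈ 𝒰, IsOpen U ∧ U.Nonempty) →
    (∀ x : X, ∃ N ∈ nhds x, {U ∈ 𝒰 | (U ∩ N).Nonempty}.Finite) → 𝒰.Finite

/-- The multiplication of the bicyclic monoid on `ℕ × ℕ`. -/
def bicyclicMul (x y : ℕ × ℕ) : ℕ × ℕ :=
  (x.1 + y.1 - min x.2 y.1, x.2 + y.2 - min x.2 y.1)

/-- The multiplication of the semigroup of `X × X`-matrix units (with zero `none`). -/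
def matUnitsMul {X : Type*} [DecidableEq X] :
    Option (X × X) → Option (X × X) → Option (X × X)
  | some (a, b), some (c, d) => if b = c then some (a, d) else none
  | _, _ => none

/-- A cycle based at the vertex `e`: a path of nonzero length from `e` to `e`. -/
def HasCycleAt (src rng : E → V) (e : V) : Prop :=
  ∃ p : GPath src rng, p.edges ≠ [] ∧ p.start = e ∧ p.range = e

end GISPaper

/-! The points of a dense set `Y` that are isolated in `Y` are isolated in `X`, and an infinite
`B ⊆ Z` still has infinitely many points in `Y`. An infinite set `D` of isolated points without
accumulation points would be clopen, and the clopen cover of `X` by `Dᶜ` and the singletons of `D`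
would have no finite subcover. -/

open Filter Set

theorem Dense.isOpen_singleton_of_inter_eq_singleton {X : Type*} [TopologicalSpace X] [T1Space X]
    {Y U : Set X} {y : X} (hY : Dense Y) (hU : IsOpen U) (hUY : U ∩ Y = {y}) :
    IsOpen ({y} : Set X) := by
  have hUy : U ⊆ {y} := by
    simpa [hUY, closure_singleton] using hY.open_subset_closure_inter hU
  have hyU : y ∈ U := (hUY.symm.subset (mem_singleton y)).1
  rwa [hUy.antisymm (singleton_subset_iff.2 hyU)] at hU

namespace GISPaper.CLPCompact

variable {X : Type*} [TopologicalSpace X] [T1Space X]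

theorem finite_of_isClopen_of_isOpen_singleton (hX : CLPCompact X) {D : Set X}
    (hD : IsClopen D) (hiso : ∀ d ∈ D, IsOpen ({d} : Set X)) : D.Finite := by
  obtain ⟨ℱ, hℱ𝒰, hℱ, hcover⟩ := hX (insert Dᶜ ((fun d => {d}) '' D))
    (by
      rintro U (rfl | ⟨d, hd, rfl⟩)
      exacts [hD.compl, ⟨isClosed_singleton, hiso d hd⟩])
    (by simp [sUnion_image, biUnion_of_singleton])
  have hD_eq : D = ⋃ U ∈ ℱ, U ∩ D := by
    rw [← iUnion₂_inter, ← sUnion_eq_biUnion, hcover, univ_inter]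
  rw [hD_eq]
  refine hℱ.biUnion fun U hU => ?_
  rcases hℱ𝒰 hU with rfl | ⟨d, -, rfl⟩
  · simp
  · exact (finite_singleton d).subset inter_subset_left

theorem exists_accPt_of_infinite (hX : CLPCompact X) {D : Set X} (hD : D.Infinite)
    (hiso : ∀ d ∈ D, IsOpen ({d} : Set X)) : ∃ x, AccPt x (𝓟 D) := by
  by_contra! hno
  have hclosed : IsClosed D :=
    (isClosed_iff_derivedSet_subset D).2 fun x hx => (hno x hx).elim
  have hopen : IsOpen D := biUnion_of_singleton D ▸ isOpen_biUnion hiso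
  exact hD (hX.finite_of_isClopen_of_isOpen_singleton ⟨hclosed, hopen⟩ hiso)

end GISPaper.CLPCompact

open GISPaper in
/-- Let `X` be a Hausdorff CLP-compact space with a dense subspace `Y`
all of whose points are isolated in `Y`, and `Z ⊆ X` with `Z \ Y` finite. Then the
closure of `Z` is countably compact at `Z`: every infinite `B ⊆ Z` has an
accumulation point lying in the closure of `Z`. -/
theorem statement0 {X : Type*} [TopologicalSpace X] [T2Space X]
    (hCLP : CLPCompact X)
    (Y : Set X) (hYdense : Dense Y)
    (hYdisc : ∀ y ∈ Y, ∃ U : Set X, IsOpen U ∧ U ∩ Y = {y})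
    (Z : Set X) (hZY : (Z \ Y).Finite) :
    ∀ B ⊆ Z, B.Infinite → ∃ x ∈ closure Z, AccPt x (Filter.principal B) := by
  intro B hBZ hB
  have hiso : ∀ y ∈ Y, IsOpen ({y} : Set X) := fun y hy =>
    let ⟨_, hU, hUY⟩ := hYdisc y hy
    hYdense.isOpen_singleton_of_inter_eq_singleton hU hUY
  have hBY : (B ∩ Y).Infinite :=
    (hB.sdiff hZY).mono fun x hx => ⟨hx.1, not_not.1 fun hxY => hx.2 ⟨hBZ hx.1, hxY⟩⟩
  obtain ⟨x, hx⟩ := hCLP.exists_accPt_of_infinite hBY fun y hy => hiso y hy.2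
  have hxB : x ∈ closure B :=
    closure_mono inter_subset_left (mem_closure_iff_clusterPt.2 hx.clusterPt)
  exact ⟨x, closure_mono hBZ hxB, hx.mono (principal_mono.2 inter_subset_left)⟩
end

section
/- Let τ be a Hausdorff topology on a graph inverse semigroup G(E) making the multiplication separately continuous. Then the following conditions are equivalent: (1) (G(E), τ) is compact; (2) (G(E), τ) is countably compact; (3) (G(E), τ) is feebly compact; (4) (G(E), τ) is CLP-compact; (5) τ = τ_c. -/
/-! In any Hausdorff topology on `G(E)` with separately continuous multiplication, every nonzero
element is isolated. For a vertex `e`: points close to `e` lie in `e G(E) e`, so if `e` were not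
isolated, points `u v⁻¹ ≠ e` with, say, `u` starting with an edge `f` would accumulate at `e`.
Left multiplication by `f f⁻¹` fixes these points, hence by continuity it fixes `e`, but
`f f⁻¹ e = f f⁻¹ ≠ e`. For a general `u v⁻¹`, left multiplication by `f⁻¹` (resp. right
multiplication by `f`) removes the first edge `f` of `u` (resp. of `v`) and has finite fibres; in a
`T₁` space a point whose image under a continuous map with finite fibres is isolated is itself
isolated, so induction on the length finishes.

Once every point other than `0` is isolated, each of the four compactness properties forces every
open neighbourhood of `0` to be cofinite, which says exactly that `τ = τ_c`; and `τ_c` is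
compact. -/

open Filter Topology

namespace GISPaper

theorem isOpen_singleton_of_finite_preimage {X Y : Type*} [TopologicalSpace X] [T1Space X]
    [TopologicalSpace Y] {g : X → Y} (hg : Continuous g) {x : X} (hx : IsOpen {g x})
    (hfin : (g ⁻¹' {g x}).Finite) : IsOpen {x} := by
  have hsub : {x} ⊆ g ⁻¹' {g x} := Set.singleton_subset_iff.2 rfl
  rw [← Set.sdiff_sdiff_cancel_left hsub]
  exact (hx.preimage hg).sdiff hfin.sdiff.isClosed

theorem compactSpace_tauC {X : Type*} [Zero X] : @CompactSpace X (tauC X) := by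
  let _ := tauC X
  refine ⟨fun f _ _ => ?_⟩
  by_cases h : ClusterPt (0 : X) f
  · exact ⟨0, trivial, h⟩
  · obtain ⟨U, ⟨h0, hU⟩, hUf⟩ :=
      (nhds_basis_opens (0 : X)).disjoint_iff_left.1 (disjoint_iff.2 (not_neBot.1 h))
    obtain ⟨x, -, hx⟩ := (hU h0).isCompact (le_principal_iff.2 hUf)
    exact ⟨x, trivial, hx⟩

section CompactnessProperties

variable {X : Type*} [TopologicalSpace X]

theorem countablyCompactSpace_of_compactSpace [CompactSpace X] : CountablyCompactSpace X :=
  fun _ hB => hB.exists_accPt_principal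

theorem feeblyCompact_of_compactSpace [CompactSpace X] : FeeblyCompact X := by
  intro 𝒰 h𝒰 hlf
  have hlf' : LocallyFinite fun U : 𝒰 => (U : Set X) := fun x => by
    obtain ⟨N, hN, hfin⟩ := hlf x
    exact ⟨N, hN, (hfin.preimage Subtype.val_injective.injOn).subset fun U hU => ⟨U.2, hU⟩⟩
  exact Set.finite_coe_iff.1 <| Set.finite_univ_iff.1 <|
    hlf'.finite_nonempty_of_compact.subset fun U _ => (h𝒰 U U.2).2

theorem clpCompact_of_compactSpace [CompactSpace X] : CLPCompact X := by
  intro 𝒰 h𝒰 hcov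
  obtain ⟨ℱ, hℱ, hfin, hsub⟩ := isCompact_univ.elim_finite_subcover_image (c := id) (b := 𝒰)
    (fun U hU => (h𝒰 U hU).isOpen) (by simp [← Set.sUnion_eq_biUnion, hcov])
  exact ⟨ℱ, hℱ, hfin, Set.eq_univ_of_univ_subset (by simpa [← Set.sUnion_eq_biUnion] using hsub)⟩

variable [Zero X]

variable (hiso : ∀ x ≠ (0 : X), IsOpen {x})
include hiso

theorem isOpen_of_zero_notMem {s : Set X} (h : (0 : X) ∉ s) : IsOpen s := by
  rw [← Set.biUnion_of_singleton s]
  exact isOpen_biUnion fun x hx => hiso x (ne_of_mem_of_not_mem hx h)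

theorem finite_compl_of_countablyCompactSpace (hc : CountablyCompactSpace X) {U : Set X}
    (hU : IsOpen U) (h0 : (0 : X) ∈ U) : Uᶜ.Finite := by
  by_contra hinf
  obtain ⟨x, hx⟩ := hc _ hinf
  rw [accPt_iff_nhds] at hx
  by_cases hxU : x ∈ U
  · obtain ⟨y, hy, -⟩ := hx U (hU.mem_nhds hxU)
    exact hy.2 hy.1
  · obtain ⟨y, hy, hyx⟩ := hx {x} ((hiso x fun h => hxU (h ▸ h0)).mem_nhds rfl)
    exact hyx hy.1

theorem finite_compl_of_feeblyCompact (hf : FeeblyCompact X) {U : Set X} (hU : IsOpen U)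
    (h0 : (0 : X) ∈ U) : Uᶜ.Finite := by
  refine Set.Finite.of_finite_image (f := fun x : X => ({x} : Set X)) (hf _ ?_ fun y => ?_)
    Set.singleton_injective.injOn
  · rintro _ ⟨x, hx, rfl⟩
    exact ⟨hiso x fun h => hx (h ▸ h0), Set.singleton_nonempty x⟩
  by_cases hy : y ∈ U
  · refine ⟨U, hU.mem_nhds hy, Set.finite_empty.subset ?_⟩
    rintro _ ⟨⟨x, hx, rfl⟩, _, rfl, hxU⟩
    exact hx hxU
  · refine ⟨{y}, (hiso y fun h => hy (h ▸ h0)).mem_nhds rfl, (Set.finite_singleton {y}).subset ?_⟩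
    rintro _ ⟨⟨x, -, rfl⟩, _, rfl, rfl⟩
    rfl

theorem finite_compl_of_clpCompact [T1Space X] (hc : CLPCompact X) {U : Set X} (hU : IsOpen U)
    (h0 : (0 : X) ∈ U) : Uᶜ.Finite := by
  have hcl : ∀ W ∈ insert U ((fun x => ({x} : Set X)) '' Uᶜ), IsClopen W := by
    rintro W (rfl | ⟨x, hx, rfl⟩)
    · exact ⟨isOpen_compl_iff.1 (isOpen_of_zero_notMem hiso fun h => h h0), hU⟩
    · exact ⟨isClosed_singleton, hiso x fun h => hx (h ▸ h0)⟩
  have hcov : ⋃₀ insert U ((fun x => ({x} : Set X)) '' Uᶜ) = Set.univ := by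
    refine Set.eq_univ_of_forall fun x => ?_
    by_cases hx : x ∈ U
    exacts [⟨U, .inl rfl, hx⟩, ⟨{x}, .inr ⟨x, hx, rfl⟩, rfl⟩]
  obtain ⟨ℱ, hℱ, hfin, hℱcov⟩ := hc _ hcl hcov
  refine (hfin.preimage Set.singleton_injective.injOn).subset fun x hx => ?_
  obtain ⟨W, hW, hxW⟩ : x ∈ ⋃₀ ℱ := hℱcov ▸ Set.mem_univ x
  rcases hℱ hW with rfl | ⟨y, -, rfl⟩
  · exact absurd hxW hx
  · rwa [Set.mem_preimage, hxW]

theorem eq_tauC_of_finite_compl [T1Space X]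
    (h : ∀ U : Set X, IsOpen U → (0 : X) ∈ U → Uᶜ.Finite) : ‹TopologicalSpace X› = tauC X := by
  refine TopologicalSpace.ext (funext fun s => propext ⟨h s, fun hs => ?_⟩)
  by_cases h0 : (0 : X) ∈ s
  · simpa using (hs h0).isClosed.isOpen_compl
  · exact isOpen_of_zero_notMem hiso h0

theorem tfae_compactSpace_of_isOpen_singleton [T1Space X] :
    List.TFAE [CompactSpace X, CountablyCompactSpace X, FeeblyCompact X, CLPCompact X,
      ‹TopologicalSpace X› = tauC X] := by
  tfae_have 1 → 2 := fun _ => countablyCompactSpace_of_compactSpace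
  tfae_have 1 → 3 := fun _ => feeblyCompact_of_compactSpace
  tfae_have 1 → 4 := fun _ => clpCompact_of_compactSpace
  tfae_have 2 → 5 := fun h =>
    eq_tauC_of_finite_compl hiso fun _ => finite_compl_of_countablyCompactSpace hiso h
  tfae_have 3 → 5 := fun h =>
    eq_tauC_of_finite_compl hiso fun _ => finite_compl_of_feeblyCompact hiso h
  tfae_have 4 → 5 := fun h =>
    eq_tauC_of_finite_compl hiso fun _ => finite_compl_of_clpCompact hiso h
  tfae_have 5 → 1 := fun h => by
    subst h
    exact compactSpace_tauC
  tfae_finish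

end CompactnessProperties

variable {V E : Type*} {src rng : E → V}

theorem GPath.src_eq_start {p : GPath src rng} {f : E} {l : List E} (h : p.edges = f :: l) :
    src f = p.start := by
  have hp := p.isPath
  rw [h] at hp
  exact hp.1

def GPath.vertex (w : V) : GPath src rng := ⟨w, [], trivial⟩

def GPath.edge (f : E) : GPath src rng := ⟨src f, [f], ⟨rfl, trivial⟩⟩

def GPath.tail (p : GPath src rng) : GPath src rng where
  start := pathEnd rng p.start (p.edges.take 1)
  edges := p.edges.drop 1
  isPath := ((isPathFrom_append src rng _ _ _).1 (by rw [List.take_append_drop]; exact p.isPath)).2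

theorem GPath.range_tail (p : GPath src rng) : p.tail.range = p.range := by
  show pathEnd rng (pathEnd rng p.start (p.edges.take 1)) (p.edges.drop 1) =
    pathEnd rng p.start p.edges
  rw [← pathEnd_append, List.take_append_drop]

namespace GISElem

def toGIS (a : GISElem src rng) : GIS src rng := some a

theorem toGIS_injective : Function.Injective (toGIS : GISElem src rng → GIS src rng) :=
  Option.some_injective _

theorem toGIS_ne_zero (a : GISElem src rng) : a.toGIS ≠ 0 :=
  Option.some_ne_none a

theorem exists_eq_toGIS {x : GIS src rng} (hx : x ≠ 0) : ∃ a : GISElem src rng, x = a.toGIS :=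
  Option.ne_none_iff_exists'.mp hx

def coords (a : GISElem src rng) : V × List E × V × List E :=
  (a.1.1.start, a.1.1.edges, a.1.2.start, a.1.2.edges)

theorem coords_injective :
    Function.Injective (coords : GISElem src rng → V × List E × V × List E) := by
  rintro ⟨⟨⟨s₁, e₁, p₁⟩, ⟨s₂, e₂, p₂⟩⟩, _⟩ ⟨⟨⟨t₁, f₁, q₁⟩, ⟨t₂, f₂, q₂⟩⟩, _⟩ h
  simp only [coords, Prod.mk.injEq] at h
  obtain ⟨rfl, rfl, rfl, rfl⟩ := h
  rfl

def vertex (w : V) : GISElem src rng := ⟨(.vertex w, .vertex w), rfl⟩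

def edge (f : E) : GISElem src rng := ⟨(.edge f, .vertex (rng f)), rfl⟩

def edgeInv (f : E) : GISElem src rng := ⟨(.vertex (rng f), .edge f), rfl⟩

def edgeProj (f : E) : GISElem src rng := ⟨(.edge f, .edge f), rfl⟩

def tailFst (a : GISElem src rng) : GISElem src rng :=
  ⟨(a.1.1.tail, a.1.2), a.1.1.range_tail.trans a.2⟩

def tailSnd (a : GISElem src rng) : GISElem src rng :=
  ⟨(a.1.1, a.1.2.tail), a.2.trans a.1.2.range_tail.symm⟩

end GISElem

open GISElem

theorem GIS.mul_zero (x : GIS src rng) : x * 0 = 0 := by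
  cases x <;> rfl

variable {a b c : GISElem src rng}

theorem toGIS_mul_toGIS_of_prefix (hs : a.1.2.start = b.1.1.start)
    (hp : a.1.2.edges <+: b.1.1.edges)
    (hc : coords c = (a.1.1.start, a.1.1.edges ++ b.1.1.edges.drop a.1.2.edges.length,
      b.1.2.start, b.1.2.edges)) :
    a.toGIS * b.toGIS = c.toGIS := by
  obtain ⟨⟨u₁, v₁⟩, ha⟩ := a
  obtain ⟨⟨u₂, v₂⟩, hb⟩ := b
  show GIS.mul (some _) (some _) = some _
  simp only [GIS.mul]
  rw [dif_pos ⟨hs, hp⟩]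
  exact congrArg some (coords_injective hc.symm)

theorem toGIS_mul_toGIS_of_prefix' (hs : b.1.1.start = a.1.2.start)
    (hp : b.1.1.edges <+: a.1.2.edges)
    (hc : coords c = (a.1.1.start, a.1.1.edges,
      b.1.2.start, b.1.2.edges ++ a.1.2.edges.drop b.1.1.edges.length)) :
    a.toGIS * b.toGIS = c.toGIS := by
  by_cases h : a.1.2.start = b.1.1.start ∧ a.1.2.edges <+: b.1.1.edges
  · -- `GIS.mul` tries the other branch first; it applies only when both paths are equal, and
    -- then gives the same product
    have heq := hp.eq_of_length (hp.length_le.antisymm h.2.length_le)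
    refine toGIS_mul_toGIS_of_prefix h.1 h.2 ?_
    simpa [heq] using hc
  · obtain ⟨⟨u₁, v₁⟩, ha⟩ := a
    obtain ⟨⟨u₂, v₂⟩, hb⟩ := b
    show GIS.mul (some _) (some _) = some _
    simp only [GIS.mul]
    rw [dif_neg h, dif_pos ⟨hs, hp⟩]
    exact congrArg some (coords_injective hc.symm)

theorem coords_of_toGIS_mul_toGIS_eq (h : a.toGIS * b.toGIS = c.toGIS) :
    (a.1.2.start = b.1.1.start ∧ a.1.2.edges <+: b.1.1.edges ∧
      coords c = (a.1.1.start, a.1.1.edges ++ b.1.1.edges.drop a.1.2.edges.length,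
        b.1.2.start, b.1.2.edges)) ∨
    (b.1.1.start = a.1.2.start ∧ b.1.1.edges <+: a.1.2.edges ∧
      coords c = (a.1.1.start, a.1.1.edges,
        b.1.2.start, b.1.2.edges ++ a.1.2.edges.drop b.1.1.edges.length)) := by
  obtain ⟨⟨u₁, v₁⟩, ha⟩ := a
  obtain ⟨⟨u₂, v₂⟩, hb⟩ := b
  replace h : GIS.mul (some ⟨(u₁, v₁), ha⟩) (some ⟨(u₂, v₂), hb⟩) = some c := h
  simp only [GIS.mul] at h
  split_ifs at h with h₁ h₂
  · exact .inl ⟨h₁.1, h₁.2, by rw [← Option.some_injective _ h]; rfl⟩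
  · exact .inr ⟨h₂.1, h₂.2, by rw [← Option.some_injective _ h]; rfl⟩

theorem prefix_of_toGIS_mul_toGIS_ne_zero (h : a.toGIS * b.toGIS ≠ 0) :
    (a.1.2.start = b.1.1.start ∧ a.1.2.edges <+: b.1.1.edges) ∨
    (b.1.1.start = a.1.2.start ∧ b.1.1.edges <+: a.1.2.edges) := by
  obtain ⟨c, hc⟩ := exists_eq_toGIS h
  rcases coords_of_toGIS_mul_toGIS_eq hc with h | h
  exacts [.inl ⟨h.1, h.2.1⟩, .inr ⟨h.1, h.2.1⟩]

theorem vertex_mul_vertex (w : V) :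
    (vertex w : GISElem src rng).toGIS * (vertex w).toGIS = (vertex w).toGIS :=
  toGIS_mul_toGIS_of_prefix rfl List.nil_prefix rfl

theorem start_eq_of_vertex_mul_ne_zero {w : V} (h : (vertex w).toGIS * b.toGIS ≠ 0) :
    b.1.1.start = w := by
  rcases prefix_of_toGIS_mul_toGIS_ne_zero h with h | h
  exacts [h.1.symm, h.1]

theorem start_eq_of_mul_vertex_ne_zero {w : V} (h : b.toGIS * (vertex w).toGIS ≠ 0) :
    b.1.2.start = w := by
  rcases prefix_of_toGIS_mul_toGIS_ne_zero h with h | h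
  exacts [h.1, h.1.symm]

theorem edges_ne_nil_of_ne_vertex {w : V} (hb : b ≠ vertex w) (h₁ : b.1.1.start = w)
    (h₂ : b.1.2.start = w) : b.1.1.edges ≠ [] ∨ b.1.2.edges ≠ [] := by
  by_contra! h
  exact hb (coords_injective (by simp [coords, vertex, GPath.vertex, h₁, h₂, h.1, h.2]))

theorem edgeProj_ne_vertex (f : E) (w : V) :
    (edgeProj f : GISElem src rng).toGIS ≠ (vertex w).toGIS := fun h => by
  simpa [edgeProj, vertex, GPath.edge, GPath.vertex] using
    congrArg (fun a => a.1.1.edges) (toGIS_injective h)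

theorem edgeProj_mul_vertex (f : E) :
    (edgeProj f : GISElem src rng).toGIS * (vertex (src f)).toGIS = (edgeProj f).toGIS :=
  toGIS_mul_toGIS_of_prefix' rfl List.nil_prefix rfl

theorem vertex_mul_edgeProj (f : E) :
    (vertex (src f) : GISElem src rng).toGIS * (edgeProj f).toGIS = (edgeProj f).toGIS :=
  toGIS_mul_toGIS_of_prefix rfl List.nil_prefix rfl

theorem edgeProj_mul_eq_self {f : E} {l : List E} (hb : b.1.1.edges = f :: l) :
    (edgeProj f).toGIS * b.toGIS = b.toGIS :=
  toGIS_mul_toGIS_of_prefix (GPath.src_eq_start hb) (by simp [edgeProj, GPath.edge, hb])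
    (by simp [coords, edgeProj, GPath.edge, hb, GPath.src_eq_start hb])

theorem mul_edgeProj_eq_self {f : E} {l : List E} (hb : b.1.2.edges = f :: l) :
    b.toGIS * (edgeProj f).toGIS = b.toGIS :=
  toGIS_mul_toGIS_of_prefix' (GPath.src_eq_start hb) (by simp [edgeProj, GPath.edge, hb])
    (by simp [coords, edgeProj, GPath.edge, hb, GPath.src_eq_start hb])

theorem head_eq_of_edgeProj_mul_ne_zero {f g : E} {l : List E}
    (h : (edgeProj f).toGIS * b.toGIS ≠ 0) (hb : b.1.1.edges = g :: l) : g = f := by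
  rcases prefix_of_toGIS_mul_toGIS_ne_zero h with ⟨-, h⟩ | ⟨-, h⟩ <;>
    simp_all [edgeProj, GPath.edge, List.cons_prefix_cons]

theorem head_eq_of_mul_edgeProj_ne_zero {f g : E} {l : List E}
    (h : b.toGIS * (edgeProj f).toGIS ≠ 0) (hb : b.1.2.edges = g :: l) : g = f := by
  rcases prefix_of_toGIS_mul_toGIS_ne_zero h with ⟨-, h⟩ | ⟨-, h⟩ <;>
    simp_all [edgeProj, GPath.edge, List.cons_prefix_cons]

theorem edgeInv_mul_eq_tailFst {f : E} {l : List E} (ha : a.1.1.edges = f :: l) :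
    (edgeInv f).toGIS * a.toGIS = a.tailFst.toGIS :=
  toGIS_mul_toGIS_of_prefix (GPath.src_eq_start ha) (by simp [edgeInv, GPath.edge, ha])
    (by simp [coords, edgeInv, tailFst, GPath.tail, GPath.vertex, GPath.edge, ha, pathEnd])

theorem mul_edge_eq_tailSnd {f : E} {l : List E} (ha : a.1.2.edges = f :: l) :
    a.toGIS * (edge f).toGIS = a.tailSnd.toGIS :=
  toGIS_mul_toGIS_of_prefix' (GPath.src_eq_start ha) (by simp [edge, GPath.edge, ha])
    (by simp [coords, edge, tailSnd, GPath.tail, GPath.vertex, GPath.edge, ha, pathEnd])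

-- Besides `(f u) v⁻¹`, the only other preimage of `u v⁻¹` is `s(f) (v')⁻¹`, when `u` is trivial
-- and `v = v' f`.
theorem finite_preimage_edgeInv_mul (f : E) (c : GISElem src rng) :
    ((fun x => (edgeInv f).toGIS * x) ⁻¹' {c.toGIS}).Finite := by
  have hK : ((coords : GISElem src rng → _) ⁻¹'
      {(src f, f :: c.1.1.edges, c.1.2.start, c.1.2.edges),
        (src f, [], c.1.2.start, c.1.2.edges.dropLast)}).Finite :=
    (Set.toFinite _).preimage coords_injective.injOn
  refine (hK.image toGIS).subset fun x (hx : _ * x = c.toGIS) => ?_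
  obtain ⟨b, rfl⟩ := exists_eq_toGIS (x := x) <| by
    rintro rfl
    exact toGIS_ne_zero c (hx.symm.trans (GIS.mul_zero _))
  refine ⟨b, ?_, rfl⟩
  show coords b = _ ∨ coords b = _
  rcases coords_of_toGIS_mul_toGIS_eq hx with ⟨hs, ⟨t, ht⟩, hc⟩ | ⟨hs, hp, hc⟩
  · simp only [coords, edgeInv, GPath.edge, GPath.vertex, Prod.mk.injEq] at hs ht hc ⊢
    left
    refine ⟨hs.symm, ?_, hc.2.2.1.symm, hc.2.2.2.symm⟩
    rw [hc.2.1, ← ht]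
    rfl
  · simp only [coords, edgeInv, GPath.edge, GPath.vertex, Prod.mk.injEq, List.prefix_cons_iff,
      List.prefix_nil] at hs hp hc ⊢
    rcases hp with hp | ⟨t, hp, rfl⟩ <;> simp_all

theorem finite_preimage_mul_edge (f : E) (c : GISElem src rng) :
    ((fun x => x * (edge f).toGIS) ⁻¹' {c.toGIS}).Finite := by
  have hK : ((coords : GISElem src rng → _) ⁻¹'
      {(c.1.1.start, c.1.1.edges, src f, f :: c.1.2.edges),
        (c.1.1.start, c.1.1.edges.dropLast, src f, [])}).Finite :=
    (Set.toFinite _).preimage coords_injective.injOn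
  refine (hK.image toGIS).subset fun x (hx : x * _ = c.toGIS) => ?_
  obtain ⟨b, rfl⟩ := exists_eq_toGIS (x := x) <| by
    rintro rfl
    exact toGIS_ne_zero c hx.symm
  refine ⟨b, ?_, rfl⟩
  show coords b = _ ∨ coords b = _
  rcases coords_of_toGIS_mul_toGIS_eq hx with ⟨hs, hp, hc⟩ | ⟨hs, ⟨t, ht⟩, hc⟩
  · simp only [coords, edge, GPath.edge, GPath.vertex, Prod.mk.injEq, List.prefix_cons_iff,
      List.prefix_nil] at hs hp hc ⊢
    rcases hp with hp | ⟨t, hp, rfl⟩ <;> simp_all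
  · simp only [coords, edge, GPath.edge, GPath.vertex, Prod.mk.injEq] at hs ht hc ⊢
    left
    refine ⟨hc.1.symm, hc.2.1.symm, hs.symm, ?_⟩
    rw [hc.2.2.2, ← ht]
    rfl

variable [TopologicalSpace (GIS src rng)] [T2Space (GIS src rng)]

theorem not_frequently_edges_fst_ne_nil (hcont : ∀ a : GIS src rng, Continuous (a * ·)) (w : V) :
    ¬∃ᶠ x in 𝓝 (vertex w : GISElem src rng).toGIS,
      ∃ b : GISElem src rng, x = b.toGIS ∧ b.1.1.start = w ∧ b.1.1.edges ≠ [] := by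
  intro h
  obtain ⟨-, b₀, -, rfl, hb₀⟩ := h.exists
  obtain ⟨f, l, hfl⟩ := List.exists_cons_of_ne_nil hb₀
  rw [← GPath.src_eq_start hfl] at h
  have hne : ∀ᶠ x in 𝓝 (vertex (src f) : GISElem src rng).toGIS, (edgeProj f).toGIS * x ≠ 0 :=
    (hcont _).continuousAt.eventually_ne (by rw [edgeProj_mul_vertex]; exact toGIS_ne_zero _)
  have hfix : ∃ᶠ x in 𝓝 (vertex (src f) : GISElem src rng).toGIS, (edgeProj f).toGIS * x = x := by
    refine (h.and_eventually hne).mono ?_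
    rintro _ ⟨⟨b, rfl, -, hb⟩, hb0⟩
    obtain ⟨g, l, hgl⟩ := List.exists_cons_of_ne_nil hb
    obtain rfl := head_eq_of_edgeProj_mul_ne_zero hb0 hgl
    exact edgeProj_mul_eq_self hgl
  exact edgeProj_ne_vertex f (src f) <| (edgeProj_mul_vertex f).symm.trans <|
    tendsto_nhds_unique_of_frequently_eq (hcont _).continuousAt tendsto_id hfix

theorem not_frequently_edges_snd_ne_nil (hcont : ∀ a : GIS src rng, Continuous (· * a)) (w : V) :
    ¬∃ᶠ x in 𝓝 (vertex w : GISElem src rng).toGIS,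
      ∃ b : GISElem src rng, x = b.toGIS ∧ b.1.2.start = w ∧ b.1.2.edges ≠ [] := by
  intro h
  obtain ⟨-, b₀, -, rfl, hb₀⟩ := h.exists
  obtain ⟨f, l, hfl⟩ := List.exists_cons_of_ne_nil hb₀
  rw [← GPath.src_eq_start hfl] at h
  have hne : ∀ᶠ x in 𝓝 (vertex (src f) : GISElem src rng).toGIS, x * (edgeProj f).toGIS ≠ 0 :=
    (hcont _).continuousAt.eventually_ne (by rw [vertex_mul_edgeProj]; exact toGIS_ne_zero _)
  have hfix : ∃ᶠ x in 𝓝 (vertex (src f) : GISElem src rng).toGIS, x * (edgeProj f).toGIS = x := by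
    refine (h.and_eventually hne).mono ?_
    rintro _ ⟨⟨b, rfl, -, hb⟩, hb0⟩
    obtain ⟨g, l, hgl⟩ := List.exists_cons_of_ne_nil hb
    obtain rfl := head_eq_of_mul_edgeProj_ne_zero hb0 hgl
    exact mul_edgeProj_eq_self hgl
  exact edgeProj_ne_vertex f (src f) <| (vertex_mul_edgeProj f).symm.trans <|
    tendsto_nhds_unique_of_frequently_eq (hcont _).continuousAt tendsto_id hfix

variable (hsep : ∀ a : GIS src rng, Continuous (a * ·) ∧ Continuous (· * a))
include hsep

theorem isOpen_singleton_vertex (w : V) : IsOpen {(vertex w : GISElem src rng).toGIS} := by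
  set e : GIS src rng := (vertex w).toGIS
  rw [isOpen_singleton_iff_punctured_nhds]
  by_contra hbot
  have : (𝓝[≠] e).NeBot := ⟨hbot⟩
  have he : e * e ≠ 0 := by rw [vertex_mul_vertex]; exact toGIS_ne_zero _
  have hl := (hsep e).1.continuousAt.eventually_ne he
  have hr := (hsep e).2.continuousAt.eventually_ne he
  have hsplit : ∀ᶠ x in 𝓝[≠] e,
      (∃ b : GISElem src rng, x = b.toGIS ∧ b.1.1.start = w ∧ b.1.1.edges ≠ []) ∨
      (∃ b : GISElem src rng, x = b.toGIS ∧ b.1.2.start = w ∧ b.1.2.edges ≠ []) := by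
    filter_upwards [self_mem_nhdsWithin, nhdsWithin_le_nhds (hl.and hr)] with x hxe ⟨hxl, hxr⟩
    obtain ⟨b, rfl⟩ := exists_eq_toGIS fun h => hxl (h ▸ GIS.mul_zero e)
    have h₁ := start_eq_of_vertex_mul_ne_zero hxl
    have h₂ := start_eq_of_mul_vertex_ne_zero hxr
    exact (edges_ne_nil_of_ne_vertex (fun h => hxe (congrArg toGIS h)) h₁ h₂).imp
      (fun h => ⟨b, rfl, h₁, h⟩) (fun h => ⟨b, rfl, h₂, h⟩)
  rcases frequently_or_distrib.1 hsplit.frequently with h | h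
  · exact not_frequently_edges_fst_ne_nil (fun a => (hsep a).1) w (h.filter_mono nhdsWithin_le_nhds)
  · exact not_frequently_edges_snd_ne_nil (fun a => (hsep a).2) w (h.filter_mono nhdsWithin_le_nhds)

theorem isOpen_singleton_toGIS (a : GISElem src rng) : IsOpen {a.toGIS} := by
  rcases hu : a.1.1.edges with _ | ⟨f, l⟩
  · rcases hv : a.1.2.edges with _ | ⟨g, l⟩
    · have hs : a.1.1.start = a.1.2.start := by
        simpa [GPath.range, hu, hv, pathEnd] using a.2
      have ha : a = vertex a.1.1.start :=
        coords_injective (by simp [coords, vertex, GPath.vertex, hu, hv, hs])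
      rw [ha]
      exact isOpen_singleton_vertex hsep _
    · have ih := isOpen_singleton_toGIS a.tailSnd
      rw [← mul_edge_eq_tailSnd hv] at ih
      exact isOpen_singleton_of_finite_preimage (hsep _).2 ih
        (by simpa only [mul_edge_eq_tailSnd hv] using finite_preimage_mul_edge g a.tailSnd)
  · have ih := isOpen_singleton_toGIS a.tailFst
    rw [← edgeInv_mul_eq_tailFst hu] at ih
    exact isOpen_singleton_of_finite_preimage (hsep _).1 ih
      (by simpa only [edgeInv_mul_eq_tailFst hu] using finite_preimage_edgeInv_mul f a.tailFst)
termination_by a.1.1.edges.length + a.1.2.edges.length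
decreasing_by
  all_goals simp_all [tailFst, tailSnd, GPath.tail]

end GISPaper

open GISPaper in
/-- For a Hausdorff topology `τ` on a graph inverse semigroup `G(E)`
making the multiplication separately continuous, the following are equivalent:
compactness, countable compactness, feeble compactness, CLP-compactness, `τ = τ_c`. -/
theorem statement2 {V E : Type*} (src rng : E → V)
    (τ : TopologicalSpace (GIS src rng)) (hT2 : @T2Space _ τ)
    (hsep : ∀ a : GIS src rng,
      @Continuous _ _ τ τ (fun x => a * x) ∧ @Continuous _ _ τ τ (fun x => x * a)) :
    List.TFAE [@CompactSpace _ τ,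
      @GISPaper.CountablyCompactSpace _ τ,
      @FeeblyCompact _ τ,
      @CLPCompact _ τ,
      τ = tauC (GIS src rng)] := by
  let _ := τ
  refine tfae_compactSpace_of_isOpen_singleton fun x hx => ?_
  obtain ⟨a, rfl⟩ := GISElem.exists_eq_toGIS hx
  exact isOpen_singleton_toGIS hsep a
end

section
/- For a graph inverse semigroup G(E) the following statements are equivalent: (1) the multiplication of G(E) is jointly continuous with respect to the topology τ_c; (2) for each nonzero element uv⁻¹ ∈ G(E), the set M_{uv⁻¹} = {(ab⁻¹, cd⁻¹) ∈ G(E) × G(E) : ab⁻¹ · cd⁻¹ = uv⁻¹} is finite; (3) for each vertex e ∈ E⁰, the set I_e = {u ∈ Path(E) : r(u) = e} is finite; (4) G(E) contains no subsemigroup isomorphic to the bicyclic monoid and no subsemigroup isomorphic to the semigroup of ω×ω-matrix units; (5) for each vertex e ∈ E⁰, the set D_e = {uv⁻¹ ∈ G(E) : r(u) = r(v) = e} (the Green's D-class of e in G(E)) is finite. -/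
/-!
If every set `I_e` is finite, a nonzero `uv⁻¹` has only finitely many factorisations: in
`ab⁻¹ · cd⁻¹ = uv⁻¹` the path `a` is a prefix of `u`, `d` is a prefix of `v`, and `b`, `c` end
where `a`, `d` do. Finite fibres of the multiplication make it continuous for `τ_c`; conversely, if
`I_e` is infinite, the factorisations `(e u⁻¹)(u e⁻¹) = e e⁻¹`, `u ∈ I_e`, contradict continuity
at `(0, 0)`.

If there is a cycle `c` at `e`, the elements `cᵐ (cⁿ)⁻¹` form a copy of the bicyclic monoid and
`I_e ∋ cⁿ` is infinite. Otherwise distinct paths ending at `e` are prefix-incomparable, so an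
infinite `I_e` yields `ω×ω`-matrix units `uₘ uₙ⁻¹`. Conversely, in a copy of either semigroup the
images `uu⁻¹`, `ww⁻¹` of two `D`-related idempotents satisfy `r(u) = r(w)`; this yields a cycle in
the bicyclic case and infinitely many paths into one vertex in the matrix case.
-/

namespace GISPaper

variable {V E : Type*} {src rng : E → V}

/-- The set `I_e`. -/
def pathsTo (src rng : E → V) (e : V) : Set (GPath src rng) :=
  {u | u.range = e}

/-- The `D`-class `D_e` of the idempotent `e e⁻¹`. -/
def dClass (src rng : E → V) (e : V) : Set (GIS src rng) :=
  {x | ∃ p : GISElem src rng, x = some p ∧ p.1.1.range = e}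

theorem isPathFrom_flatten_replicate {v : V} {l : List E} (hl : IsPathFrom src rng v l)
    (hv : pathEnd rng v l = v) (n : ℕ) :
    IsPathFrom src rng v (List.replicate n l).flatten ∧
      pathEnd rng v (List.replicate n l).flatten = v := by
  induction n with
  | zero => exact ⟨trivial, rfl⟩
  | succ n ih =>
    rw [List.replicate_succ, List.flatten_cons, isPathFrom_append, pathEnd_append, hv]
    exact ⟨⟨hl, ih.1⟩, ih.2⟩

namespace GPath

theorem ext {p q : GPath src rng} (hs : p.start = q.start) (he : p.edges = q.edges) : p = q := by
  cases p; cases q; cases hs; cases he; rfl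

instance : PartialOrder (GPath src rng) where
  le p q := p.start = q.start ∧ p.edges <+: q.edges
  le_refl _ := ⟨rfl, List.prefix_refl _⟩
  le_trans _ _ _ hpq hqr := ⟨hpq.1.trans hqr.1, hpq.2.trans hqr.2⟩
  le_antisymm _ _ hpq hqp := ext hpq.1 (hpq.2.eq_of_length_le hqp.2.length_le)

theorem le_def {p q : GPath src rng} : p ≤ q ↔ p.start = q.start ∧ p.edges <+: q.edges :=
  Iff.rfl

theorem finite_Iic (w : GPath src rng) : (Set.Iic w).Finite := by
  refine Set.Finite.of_finite_image (f := edges) ((List.finite_toSet w.edges.inits).subset ?_) ?_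
  · rintro _ ⟨p, hp, rfl⟩
    exact (List.mem_inits _ _).2 hp.2
  · intro p hp q hq he
    exact ext (hp.1.trans hq.1.symm) he

def ExtendsBy (q p : GPath src rng) (t : List E) : Prop :=
  q.start = p.start ∧ q.edges = p.edges ++ t

variable {p q q' : GPath src rng} {t : List E}

theorem ExtendsBy.le (h : q.ExtendsBy p t) : p ≤ q :=
  ⟨h.1.symm, t, h.2.symm⟩

theorem exists_extendsBy_of_le (h : p ≤ q) : ∃ t, q.ExtendsBy p t :=
  let ⟨t, ht⟩ := h.2
  ⟨t, h.1.symm, ht.symm⟩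

theorem ExtendsBy.unique (h : q.ExtendsBy p t) (h' : q'.ExtendsBy p t) : q = q' :=
  ext (h.1.trans h'.1.symm) (h.2.trans h'.2.symm)

theorem extendsBy_nil : q.ExtendsBy p [] ↔ q = p :=
  ⟨fun h => ext h.1 (by simpa using h.2), by rintro rfl; exact ⟨rfl, by simp⟩⟩

theorem ExtendsBy.eq_nil_of_self (h : p.ExtendsBy p t) : t = [] :=
  List.append_right_eq_self.1 h.2.symm

theorem ExtendsBy.isPathFrom (h : q.ExtendsBy p t) : IsPathFrom src rng p.range t := by
  have hq := q.isPath
  rw [h.1, h.2, isPathFrom_append] at hq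
  exact hq.2

theorem ExtendsBy.range_eq (h : q.ExtendsBy p t) : q.range = pathEnd rng p.range t := by
  rw [range, h.1, h.2, pathEnd_append]
  rfl

theorem hasCycleAt_range_of_lt (hlt : p < q) (hr : p.range = q.range) :
    HasCycleAt src rng p.range := by
  obtain ⟨t, ht⟩ := exists_extendsBy_of_le hlt.le
  refine ⟨⟨p.range, t, ht.isPathFrom⟩, ?_, rfl, ht.range_eq.symm.trans hr.symm⟩
  rintro rfl
  exact hlt.ne (extendsBy_nil.1 ht).symm

def pow (c : GPath src rng) (hc : c.range = c.start) (n : ℕ) : GPath src rng :=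
  ⟨c.start, (List.replicate n c.edges).flatten, (isPathFrom_flatten_replicate c.isPath hc n).1⟩

variable {c : GPath src rng} (hc : c.range = c.start)

theorem range_pow (n : ℕ) : (c.pow hc n).range = c.start :=
  (isPathFrom_flatten_replicate c.isPath hc n).2

theorem pow_add_extendsBy (m n : ℕ) :
    (c.pow hc (m + n)).ExtendsBy (c.pow hc m) (c.pow hc n).edges :=
  ⟨rfl, by simp only [pow, List.replicate_add, List.flatten_append]⟩

theorem pow_injective (hne : c.edges ≠ []) : Function.Injective (c.pow hc) := by
  intro m n h
  have hlen := congrArg (fun p : GPath src rng => p.edges.length) h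
  simp only [pow, List.length_flatten, List.map_replicate, List.sum_replicate, smul_eq_mul] at hlen
  exact Nat.eq_of_mul_eq_mul_right (List.length_pos_iff.2 hne) hlen

end GPath

open GPath

theorem HasCycleAt.infinite_pathsTo {e : V} (h : HasCycleAt src rng e) :
    (pathsTo src rng e).Infinite := by
  obtain ⟨c, hne, rfl, hc⟩ := h
  exact Set.infinite_of_injective_forall_mem (pow_injective hc hne) (range_pow hc)

namespace GIS

def mk (u v : GPath src rng) (h : u.range = v.range) : GIS src rng :=
  some ⟨(u, v), h⟩

abbrev idem (u : GPath src rng) : GIS src rng :=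
  mk u u rfl

variable {u v w u' v' u₁ v₁ u₂ v₂ : GPath src rng} {h : u.range = v.range}
  {h' : u'.range = v'.range} {h₁ : u₁.range = v₁.range} {h₂ : u₂.range = v₂.range} {t : List E}

theorem mk_ne_zero : mk u v h ≠ 0 :=
  Option.some_ne_none _

theorem mk_inj : mk u v h = mk u' v' h' ↔ u = u' ∧ v = v' := by
  refine ⟨fun H => Prod.ext_iff.1 (congrArg Subtype.val (Option.some_injective _ H)), ?_⟩
  rintro ⟨rfl, rfl⟩
  rfl

theorem idem_injective : Function.Injective (idem : GPath src rng → GIS src rng) :=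
  fun _ _ H => (mk_inj.1 H).1

theorem exists_eq_mk {x : GIS src rng} (hx : x ≠ 0) : ∃ u v h, x = mk u v h := by
  obtain ⟨⟨⟨u, v⟩, h⟩, rfl⟩ := Option.ne_none_iff_exists'.1 hx
  exact ⟨u, v, h, rfl⟩

theorem mul_zero_s4 (x : GIS src rng) : x * 0 = 0 := by
  rcases x with _ | ⟨⟨u, v⟩, h⟩ <;> rfl

theorem ne_zero_of_mul_ne_zero {x y : GIS src rng} (h : x * y ≠ 0) : x ≠ 0 ∧ y ≠ 0 :=
  ⟨by rintro rfl; exact h (GIS.zero_mul y), by rintro rfl; exact h (mul_zero_s4 x)⟩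

theorem mul_mk_mk :
    mk u₁ v₁ h₁ * mk u₂ v₂ h₂ = GIS.mul (some ⟨(u₁, v₁), h₁⟩) (some ⟨(u₂, v₂), h₂⟩) :=
  rfl

theorem exists_mk_mul_mk_of_extendsBy_left (ht : u₂.ExtendsBy v₁ t) :
    ∃ u h, mk u₁ v₁ h₁ * mk u₂ v₂ h₂ = mk u v₂ h ∧ u.ExtendsBy u₁ t := by
  have hle : v₁.start = u₂.start ∧ v₁.edges <+: u₂.edges := ht.le
  have hdrop : u₂.edges.drop v₁.edges.length = t := by rw [ht.2, List.drop_left]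
  rw [mul_mk_mk, GIS.mul, dif_pos hle]
  exact ⟨_, _, rfl, rfl, congrArg (u₁.edges ++ ·) hdrop⟩

theorem exists_mk_mul_mk_of_extendsBy_right (ht : v₁.ExtendsBy u₂ t) :
    ∃ v h, mk u₁ v₁ h₁ * mk u₂ v₂ h₂ = mk u₁ v h ∧ v.ExtendsBy v₂ t := by
  by_cases hle : v₁ ≤ u₂
  · -- both branches of the multiplication apply, and they agree
    obtain rfl : v₁ = u₂ := le_antisymm hle ht.le
    obtain rfl := ht.eq_nil_of_self
    obtain ⟨u, h, hmul, hu⟩ :=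
      exists_mk_mul_mk_of_extendsBy_left (h₁ := h₁) (h₂ := h₂) (extendsBy_nil.2 rfl)
    obtain rfl := extendsBy_nil.1 hu
    exact ⟨v₂, h, hmul, extendsBy_nil.2 rfl⟩
  · have hle' : u₂.start = v₁.start ∧ u₂.edges <+: v₁.edges := ht.le
    have hdrop : v₁.edges.drop u₂.edges.length = t := by rw [ht.2, List.drop_left]
    rw [mul_mk_mk, GIS.mul, dif_neg (mt le_def.2 hle), dif_pos hle']
    exact ⟨_, _, rfl, rfl, congrArg (v₂.edges ++ ·) hdrop⟩

theorem mk_mul_mk_eq_zero (h : ¬ v₁ ≤ u₂) (h' : ¬ u₂ ≤ v₁) : mk u₁ v₁ h₁ * mk u₂ v₂ h₂ = 0 := by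
  rw [mul_mk_mk, GIS.mul, dif_neg (mt le_def.2 h), dif_neg (mt le_def.2 h')]
  rfl

theorem mk_mul_mk_of_extendsBy_left {h : u.range = v₂.range} (ht : u₂.ExtendsBy v₁ t)
    (hu : u.ExtendsBy u₁ t) : mk u₁ v₁ h₁ * mk u₂ v₂ h₂ = mk u v₂ h := by
  obtain ⟨u', h', hmul, hu'⟩ := exists_mk_mul_mk_of_extendsBy_left (h₁ := h₁) (h₂ := h₂) ht
  obtain rfl := hu'.unique hu
  exact hmul

theorem mk_mul_mk_of_extendsBy_right {h : u₁.range = v.range} (ht : v₁.ExtendsBy u₂ t)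
    (hv : v.ExtendsBy v₂ t) : mk u₁ v₁ h₁ * mk u₂ v₂ h₂ = mk u₁ v h := by
  obtain ⟨v', h', hmul, hv'⟩ := exists_mk_mul_mk_of_extendsBy_right (h₁ := h₁) (h₂ := h₂) ht
  obtain rfl := hv'.unique hv
  exact hmul

theorem mk_mul_mk_same {h' : v.range = w.range} : mk u v h * mk v w h' = mk u w (h.trans h') :=
  mk_mul_mk_of_extendsBy_left (extendsBy_nil.2 rfl) (extendsBy_nil.2 rfl)

theorem mk_mul_mk_eq_mk (H : mk u₁ v₁ h₁ * mk u₂ v₂ h₂ = mk u v h) :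
    (∃ t, u₂.ExtendsBy v₁ t ∧ u.ExtendsBy u₁ t ∧ v = v₂) ∨
      (∃ t, v₁.ExtendsBy u₂ t ∧ u = u₁ ∧ v.ExtendsBy v₂ t) := by
  by_cases hle : v₁ ≤ u₂
  · obtain ⟨t, ht⟩ := exists_extendsBy_of_le hle
    obtain ⟨u', h', hmul, hu'⟩ := exists_mk_mul_mk_of_extendsBy_left (h₁ := h₁) (h₂ := h₂) ht
    obtain ⟨rfl, rfl⟩ := mk_inj.1 (hmul.symm.trans H)
    exact Or.inl ⟨t, ht, hu', rfl⟩
  by_cases hle' : u₂ ≤ v₁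
  · obtain ⟨t, ht⟩ := exists_extendsBy_of_le hle'
    obtain ⟨v', h', hmul, hv'⟩ := exists_mk_mul_mk_of_extendsBy_right (h₁ := h₁) (h₂ := h₂) ht
    obtain ⟨rfl, rfl⟩ := mk_inj.1 (hmul.symm.trans H)
    exact Or.inr ⟨t, ht, rfl, hv'⟩
  exact absurd ((mk_mul_mk_eq_zero hle hle').symm.trans H).symm mk_ne_zero

theorem le_of_mk_mul_mk_eq_mk (H : mk u₁ v₁ h₁ * mk u₂ v₂ h₂ = mk u v h) : u₁ ≤ u ∧ v₂ ≤ v := by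
  rcases mk_mul_mk_eq_mk H with ⟨t, -, hu, rfl⟩ | ⟨t, -, rfl, hv⟩
  · exact ⟨hu.le, le_rfl⟩
  · exact ⟨le_rfl, hv.le⟩

theorem eq_of_mk_mul_self (H : mk u v h * mk u v h = mk u v h) : u = v := by
  rcases mk_mul_mk_eq_mk H with ⟨t, ht, hu, -⟩ | ⟨t, ht, -, hv⟩
  · obtain rfl := hu.eq_nil_of_self
    exact extendsBy_nil.1 ht
  · obtain rfl := hv.eq_nil_of_self
    exact (extendsBy_nil.1 ht).symm

theorem exists_eq_idem_of_mul_self {x : GIS src rng} (hx : x ≠ 0) (hxx : x * x = x) :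
    ∃ u, x = idem u := by
  obtain ⟨u, v, h, rfl⟩ := exists_eq_mk hx
  obtain rfl := eq_of_mk_mul_self hxx
  exact ⟨u, rfl⟩

/-- Writing `x = p q⁻¹`, the four products squeeze `p` between prefixes of `u` and `q` between
prefixes of `w`, so `u = p` and `w = q`. -/
theorem range_eq_of_mul_eq_idem {x y : GIS src rng} (hxy : x * y = idem u) (hyx : y * x = idem w)
    (hux : idem u * x = x) (hxw : x * idem w = x) : u.range = w.range := by
  obtain ⟨hx, hy⟩ := ne_zero_of_mul_ne_zero fun h0 => mk_ne_zero (hxy.symm.trans h0)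
  obtain ⟨p, q, hpq, rfl⟩ := exists_eq_mk hx
  obtain ⟨p', q', _, rfl⟩ := exists_eq_mk hy
  have hpu : p = u := le_antisymm (le_of_mk_mul_mk_eq_mk hxy).1 (le_of_mk_mul_mk_eq_mk hux).1
  have hqw : q = w := le_antisymm (le_of_mk_mul_mk_eq_mk hyx).2 (le_of_mk_mul_mk_eq_mk hxw).2
  rw [← hpu, ← hqw, hpq]

end GIS

open GIS

theorem finite_dClass_of_finite_pathsTo (h3 : ∀ e, (pathsTo src rng e).Finite) (e : V) :
    (dClass src rng e).Finite := by
  refine ((((h3 e).prod (h3 e)).preimage Subtype.val_injective.injOn).image some).subset ?_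
  rintro _ ⟨p, rfl, hp⟩
  exact ⟨p, ⟨hp, p.2.symm.trans hp⟩, rfl⟩

theorem finite_mul_fiber_of_finite_dClass (h5 : ∀ e, (dClass src rng e).Finite)
    {x : GIS src rng} (hx : x ≠ 0) : {p : GIS src rng × GIS src rng | p.1 * p.2 = x}.Finite := by
  obtain ⟨u, v, h, rfl⟩ := exists_eq_mk hx
  refine (((finite_Iic u).biUnion fun p _ => h5 p.range).prod
    ((finite_Iic v).biUnion fun q _ => h5 q.range)).subset ?_
  rintro ⟨a, b⟩ (hab : a * b = mk u v h)
  obtain ⟨ha, hb⟩ := ne_zero_of_mul_ne_zero (hab ▸ mk_ne_zero)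
  obtain ⟨u₁, v₁, h₁, rfl⟩ := exists_eq_mk ha
  obtain ⟨u₂, v₂, h₂, rfl⟩ := exists_eq_mk hb
  obtain ⟨hu, hv⟩ := le_of_mk_mul_mk_eq_mk hab
  exact ⟨Set.mem_biUnion hu ⟨_, rfl, rfl⟩, Set.mem_biUnion hv ⟨_, rfl, h₂⟩⟩

theorem finite_pathsTo_of_finite_dClass (h5 : ∀ e, (dClass src rng e).Finite) (e : V) :
    (pathsTo src rng e).Finite :=
  ((h5 e).preimage idem_injective.injOn).subset fun u hu => ⟨⟨(u, u), rfl⟩, rfl, hu⟩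

theorem exists_hasCycleAt_of_bicyclic_embedding {f : ℕ × ℕ → GIS src rng}
    (hinj : Function.Injective f) (hf : ∀ x y, f (bicyclicMul x y) = f x * f y) :
    ∃ e, HasCycleAt src rng e := by
  have hf' : ∀ x y z, bicyclicMul x y = z → f x * f y = f z := fun x y z h => h ▸ (hf x y).symm
  have hdiag : ∀ n, f (n, n) ≠ 0 := fun n h0 => by
    have h := hf' (n, n) (n + 1, n + 1) (n + 1, n + 1) (by simp [bicyclicMul])
    rw [h0, GIS.zero_mul] at h
    simpa using hinj (h0.trans h)
  obtain ⟨u, hu⟩ := exists_eq_idem_of_mul_self (hdiag 0) (hf' _ _ _ rfl)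
  obtain ⟨w, hw⟩ := exists_eq_idem_of_mul_self (hdiag 1) (hf' _ _ _ rfl)
  have hle : u ≤ w := by
    have h := hf' (0, 0) (1, 1) (1, 1) rfl
    rw [hu, hw] at h
    exact (le_of_mk_mul_mk_eq_mk h).1
  have hne : u ≠ w := by
    rintro rfl
    simpa using hinj (hu.trans hw.symm)
  have hr : u.range = w.range := by
    refine range_eq_of_mul_eq_idem (x := f (0, 1)) (y := f (1, 0)) ?_ ?_ ?_ ?_ <;>
      simp only [← hu, ← hw] <;> exact hf' _ _ _ rfl
  exact ⟨_, hasCycleAt_range_of_lt (lt_of_le_of_ne hle hne) hr⟩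

theorem exists_infinite_pathsTo_of_matUnits_embedding {f : Option (ℕ × ℕ) → GIS src rng}
    (hinj : Function.Injective f) (hf : ∀ x y, f (matUnitsMul x y) = f x * f y) :
    ∃ e, (pathsTo src rng e).Infinite := by
  have hf' : ∀ x y z, matUnitsMul x y = z → f x * f y = f z := fun x y z h => h ▸ (hf x y).symm
  have hdiag : ∀ n, f (some (n, n)) ≠ 0 := fun n h0 => by
    have h := hf' (some (n, n)) (some (n + 1, n + 1)) none (by simp [matUnitsMul])
    rw [h0, GIS.zero_mul] at h
    simpa using hinj (h0.trans h)
  choose u hu using fun n =>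
    exists_eq_idem_of_mul_self (hdiag n) (hf' (some (n, n)) _ _ (by simp [matUnitsMul]))
  have hinj_u : Function.Injective u := fun a b hab =>
    (Prod.ext_iff.1 (Option.some_injective _ (hinj ((hu a).trans (hab ▸ (hu b).symm))))).1
  refine ⟨(u 0).range, Set.infinite_of_injective_forall_mem hinj_u fun n => ?_⟩
  refine (range_eq_of_mul_eq_idem (x := f (some (0, n))) (y := f (some (n, 0))) ?_ ?_ ?_ ?_).symm <;>
    simp only [← hu] <;> exact hf' _ _ _ (by simp [matUnitsMul])

theorem exists_bicyclic_embedding_of_hasCycleAt {e : V} (h : HasCycleAt src rng e) :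
    ∃ f : ℕ × ℕ → GIS src rng, Function.Injective f ∧
      ∀ x y, f (bicyclicMul x y) = f x * f y := by
  obtain ⟨c, hne, hs, hr⟩ := h
  have hc : c.range = c.start := hr.trans hs.symm
  refine ⟨fun x => mk (c.pow hc x.1) (c.pow hc x.2) ((range_pow hc _).trans (range_pow hc _).symm),
    fun x y hxy => ?_, ?_⟩
  · obtain ⟨h1, h2⟩ := mk_inj.1 hxy
    exact Prod.ext (pow_injective hc hne h1) (pow_injective hc hne h2)
  rintro ⟨m, n⟩ ⟨k, l⟩
  rcases le_total n k with hnk | hkn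
  · obtain ⟨d, rfl⟩ := Nat.exists_eq_add_of_le hnk
    rw [show bicyclicMul (m, n) (n + d, l) = (m + d, l) by simp [bicyclicMul]; omega]
    exact (mk_mul_mk_of_extendsBy_left (pow_add_extendsBy hc n d) (pow_add_extendsBy hc m d)).symm
  · obtain ⟨d, rfl⟩ := Nat.exists_eq_add_of_le hkn
    rw [show bicyclicMul (m, k + d) (k, l) = (m, l + d) by simp [bicyclicMul]; omega]
    exact (mk_mul_mk_of_extendsBy_right (pow_add_extendsBy hc k d) (pow_add_extendsBy hc l d)).symm

theorem exists_matUnits_embedding {e : V} {u : ℕ → GPath src rng} (hu : ∀ n, (u n).range = e)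
    (hanti : ∀ m n, u m ≤ u n → m = n) :
    ∃ f : Option (ℕ × ℕ) → GIS src rng, Function.Injective f ∧
      ∀ x y, f (matUnitsMul x y) = f x * f y := by
  let f : Option (ℕ × ℕ) → GIS src rng
    | none => 0
    | some (m, n) => mk (u m) (u n) ((hu m).trans (hu n).symm)
  refine ⟨f, ?_, ?_⟩
  · rintro (_ | ⟨m, n⟩) (_ | ⟨k, l⟩) h
    · rfl
    · exact absurd h.symm mk_ne_zero
    · exact absurd h mk_ne_zero
    · obtain ⟨h1, h2⟩ := mk_inj.1 h
      rw [hanti _ _ h1.le, hanti _ _ h2.le]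
  rintro (_ | ⟨m, n⟩) (_ | ⟨k, l⟩)
  · rfl
  · exact (GIS.zero_mul _).symm
  · exact (mul_zero_s4 _).symm
  by_cases hnk : n = k
  · subst hnk
    rw [show matUnitsMul (some (m, n)) (some (n, l)) = some (m, l) by simp [matUnitsMul]]
    exact mk_mul_mk_same.symm
  · rw [show matUnitsMul (some (m, n)) (some (k, l)) = none by simp [matUnitsMul, hnk]]
    exact (mk_mul_mk_eq_zero (fun h => hnk (hanti _ _ h)) fun h => hnk (hanti _ _ h).symm).symm

theorem exists_matUnits_embedding_of_infinite {e : V} (hinf : (pathsTo src rng e).Infinite)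
    (hnc : ¬ HasCycleAt src rng e) :
    ∃ f : Option (ℕ × ℕ) → GIS src rng, Function.Injective f ∧
      ∀ x y, f (matUnitsMul x y) = f x * f y := by
  let u : ℕ → GPath src rng := fun n => hinf.natEmbedding _ n
  have hu : ∀ n, (u n).range = e := fun n => (hinf.natEmbedding _ n).2
  refine exists_matUnits_embedding hu fun m n hmn => ?_
  by_contra hne
  have hlt : u m < u n := hmn.lt_of_ne fun h => hne ((hinf.natEmbedding _).injective (Subtype.ext h))
  exact hnc (hu m ▸ hasCycleAt_range_of_lt hlt ((hu m).trans (hu n).symm))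

section TauC

attribute [local instance] tauC

variable {α β γ : Type*} [Zero α] [Zero β] [Zero γ]

theorem isOpen_singleton_tauC {x : α} (hx : x ≠ 0) : IsOpen ({x} : Set α) :=
  fun h0 => absurd (Set.mem_singleton_iff.1 h0).symm hx

instance t1Space_tauC : T1Space α :=
  ⟨fun x => isOpen_compl_iff.1 fun _ => by simp⟩

theorem cofinite_le_nhds_zero_tauC : Filter.cofinite ≤ nhds (0 : α) := fun s hs => by
  obtain ⟨t, hts, ht, h0⟩ := mem_nhds_iff.1 hs
  exact Filter.mem_cofinite.2 ((ht h0).subset (Set.compl_subset_compl.2 hts))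

theorem continuous_tauC_of_finite_fibers {f : α × β → γ}
    (hfib : ∀ z ≠ 0, (f ⁻¹' {z}).Finite) (hf0 : ∀ p, f p ≠ 0 → p.1 ≠ 0 ∧ p.2 ≠ 0) :
    Continuous f := by
  refine continuous_def.2 fun U hU => ?_
  by_cases h0 : (0 : γ) ∈ U
  · have hfin : (f ⁻¹' Uᶜ).Finite := Set.biUnion_preimage_singleton f Uᶜ ▸
      (hU h0).biUnion fun z hz => hfib z fun hz0 => hz (hz0 ▸ h0)
    rw [← compl_compl (f ⁻¹' U), ← Set.preimage_compl]
    exact hfin.isClosed.isOpen_compl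
  · refine isOpen_iff_forall_mem_open.2 fun p hp => ⟨{p}, Set.singleton_subset_iff.2 hp, ?_, rfl⟩
    obtain ⟨h1, h2⟩ := hf0 p fun h => h0 (h ▸ hp)
    rw [← Set.singleton_prod_singleton]
    exact (isOpen_singleton_tauC h1).prod (isOpen_singleton_tauC h2)

theorem eventually_cofinite_ne_of_continuous {f : α × β → γ} (hf : Continuous f)
    (hf0 : f (0, 0) = 0) {z : γ} (hz : z ≠ 0) :
    ∀ᶠ p in Filter.cofinite ×ˢ Filter.cofinite, f p ≠ z := by
  have h := hf.continuousAt.eventually_ne (hf0 ▸ hz.symm : f (0, 0) ≠ z)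
  rw [nhds_prod_eq] at h
  exact h.filter_mono (Filter.prod_mono cofinite_le_nhds_zero_tauC cofinite_le_nhds_zero_tauC)

theorem finite_pathsTo_of_continuous_mul
    (h1 : Continuous fun p : GIS src rng × GIS src rng => p.1 * p.2) (e : V) :
    (pathsTo src rng e).Finite := by
  by_contra hinf
  have : Infinite (pathsTo src rng e) := Set.infinite_coe_iff.2 hinf
  let o : GPath src rng := ⟨e, [], trivial⟩
  have hg : Filter.Tendsto (fun u : pathsTo src rng e => (mk o u.1 u.2.symm, mk u.1 o u.2))
      Filter.cofinite (Filter.cofinite ×ˢ Filter.cofinite) :=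
    (Function.Injective.tendsto_cofinite fun _ _ h => Subtype.ext (mk_inj.1 h).2).prodMk
      (Function.Injective.tendsto_cofinite fun _ _ h => Subtype.ext (mk_inj.1 h).1)
  obtain ⟨u, hu⟩ := (hg.eventually (eventually_cofinite_ne_of_continuous h1 (GIS.zero_mul 0)
    (mk_ne_zero (u := o) (h := rfl)))).exists
  exact hu mk_mul_mk_same

end TauC

end GISPaper

open GISPaper in
/-- For a graph inverse semigroup `G(E)` the following are equivalent:
(1) the multiplication is jointly continuous w.r.t. `τ_c`;
(2) for each nonzero `uv⁻¹` the set `M_{uv⁻¹} = {(a,c) : a · c = uv⁻¹}` is finite;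
(3) for each vertex `e` the set `I_e = {u ∈ Path(E) : r(u) = e}` is finite;
(4) `G(E)` contains no copy of the bicyclic monoid and no copy of the semigroup of
`ω×ω`-matrix units;
(5) each `D`-class `D_e = {uv⁻¹ : r(u) = r(v) = e}` is finite. -/
theorem statement4 {V E : Type*} (src rng : E → V) :
    List.TFAE
      [@Continuous _ _ (@instTopologicalSpaceProd _ _ (tauC (GIS src rng)) (tauC (GIS src rng)))
          (tauC (GIS src rng)) (fun p : GIS src rng × GIS src rng => p.1 * p.2),
       ∀ x : GIS src rng, x ≠ 0 →
          {p : GIS src rng × GIS src rng | p.1 * p.2 = x}.Finite,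
       ∀ e : V, {u : GPath src rng | u.range = e}.Finite,
       (¬ ∃ f : ℕ × ℕ → GIS src rng, Function.Injective f ∧
            ∀ x y : ℕ × ℕ, f (bicyclicMul x y) = f x * f y) ∧
         (¬ ∃ f : Option (ℕ × ℕ) → GIS src rng, Function.Injective f ∧
            ∀ x y : Option (ℕ × ℕ), f (matUnitsMul x y) = f x * f y),
       ∀ e : V, {x : GIS src rng | ∃ p : GISElem src rng,
          x = some p ∧ p.1.1.range = e}.Finite] := by
  tfae_have 1 → 3 := finite_pathsTo_of_continuous_mul
  tfae_have 3 → 5 := finite_dClass_of_finite_pathsTo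
  tfae_have 5 → 2 := fun h5 _ => finite_mul_fiber_of_finite_dClass h5
  tfae_have 2 → 1 := fun h2 =>
    continuous_tauC_of_finite_fibers h2 fun _ => GIS.ne_zero_of_mul_ne_zero
  tfae_have 3 → 4 := fun h3 =>
    ⟨fun ⟨_, hinj, hf⟩ =>
      let ⟨_, hc⟩ := exists_hasCycleAt_of_bicyclic_embedding hinj hf
      hc.infinite_pathsTo (h3 _),
    fun ⟨_, hinj, hf⟩ =>
      let ⟨e, he⟩ := exists_infinite_pathsTo_of_matUnits_embedding hinj hf
      he (h3 e)⟩
  tfae_have 4 → 3 := by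
    rintro ⟨hbic, hmat⟩ e
    by_contra hinf
    by_cases hc : HasCycleAt src rng e
    · exact hbic (exists_bicyclic_embedding_of_hasCycleAt hc)
    · exact hmat (exists_matUnits_embedding_of_infinite hinf hc)
  tfae_finish
end
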